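/- Let A be a Banach algebra and D : A → A* a bounded surjective derivation. Then A has the I-w*w property (i.e., for each a'' ∈ A**, the map b'' ↦ a''b'' on A** is weak-star to weak continuous) if and only if D''(A**)·A** ⊆ A*. In particular, if D''(A**)·A** ⊆ A*, then A is Arens regular. -/

import Mathlib

set_option maxHeartbeats 1000000

open Filter Topology ContinuousLinearMap NormedSpace

noncomputable section ArensSetup

/-- `NormedSpace.Dual` as it stood in the older Mathlib (removed since; `StrongDual` replaces it). -/
abbrev NormedSpace.Dual (𝕜 : Type*) [NontriviallyNormedField 𝕜] (E : Type*) [SeminormedAddCommGroup E]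
    [NormedSpace 𝕜 E] : Type _ :=
  E →L[𝕜] 𝕜

/-- The adjoint (transpose) of a continuous linear map between normed spaces. -/
def adjCLM {E F : Type*} [SeminormedAddCommGroup E] [NormedSpace ℝ E]
    [SeminormedAddCommGroup F] [NormedSpace ℝ F] (T : E →L[ℝ] F) :
    Dual ℝ F →L[ℝ] Dual ℝ E :=
  (ContinuousLinearMap.compL ℝ E F ℝ).flip T

@[simp] theorem adjCLM_apply {E F : Type*} [SeminormedAddCommGroup E] [NormedSpace ℝ E]
    [SeminormedAddCommGroup F] [NormedSpace ℝ F] (T : E →L[ℝ] F) (g : Dual ℝ F) (x : E) :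
    adjCLM T g x = g (T x) := rfl

/-- One-step Arens-type adjoint of a bounded bilinear map:
`ext1 β g' e = g' ∘ (β e)`. -/
def ext1 {E F G : Type*} [SeminormedAddCommGroup E] [NormedSpace ℝ E]
    [SeminormedAddCommGroup F] [NormedSpace ℝ F] [SeminormedAddCommGroup G] [NormedSpace ℝ G]
    (β : E →L[ℝ] F →L[ℝ] G) : Dual ℝ G →L[ℝ] E →L[ℝ] Dual ℝ F :=
  ((ContinuousLinearMap.compL ℝ F G ℝ).flip.comp β).flip

@[simp] theorem ext1_apply {E F G : Type*} [SeminormedAddCommGroup E] [NormedSpace ℝ E]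
    [SeminormedAddCommGroup F] [NormedSpace ℝ F] [SeminormedAddCommGroup G] [NormedSpace ℝ G]
    (β : E →L[ℝ] F →L[ℝ] G) (g' : Dual ℝ G) (e : E) (f : F) :
    ext1 β g' e f = g' (β e f) := rfl

/-- Triple adjoint: the (first) Arens extension of a bounded bilinear map to the
second duals. -/
def ext3 {E F G : Type*} [SeminormedAddCommGroup E] [NormedSpace ℝ E]
    [SeminormedAddCommGroup F] [NormedSpace ℝ F] [SeminormedAddCommGroup G] [NormedSpace ℝ G]
    (β : E →L[ℝ] F →L[ℝ] G) :
    Dual ℝ (Dual ℝ E) →L[ℝ] Dual ℝ (Dual ℝ F) →L[ℝ] Dual ℝ (Dual ℝ G) :=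
  ext1 (ext1 (ext1 β))

variable (A : Type*) [NonUnitalNormedRing A] [NormedSpace ℝ A]
  [SMulCommClass ℝ A A] [IsScalarTower ℝ A A] [CompleteSpace A]

/-- The first (left) Arens product on `A**`: `⟨a''b'', a'⟩ = ⟨a'', b''a'⟩`. -/
def fArens : Dual ℝ (Dual ℝ A) →L[ℝ] Dual ℝ (Dual ℝ A) →L[ℝ] Dual ℝ (Dual ℝ A) :=
  ext3 (ContinuousLinearMap.mul ℝ A)

/-- The second (right) Arens product on `A**`: `⟨a''∘b'', a'⟩ = ⟨b'', a'∘a''⟩`. -/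
def sArens : Dual ℝ (Dual ℝ A) →L[ℝ] Dual ℝ (Dual ℝ A) →L[ℝ] Dual ℝ (Dual ℝ A) :=
  (ext3 (ContinuousLinearMap.mul ℝ A).flip).flip

/-- `A` is Arens regular when the two Arens products on `A**` coincide. -/
def ArensRegular : Prop := fArens A = sArens A

variable {A}

/-- Weak-star to weak continuity for a map from the dual of `E` into `F`. -/
def WStarToWCont {E F : Type*} [SeminormedAddCommGroup E] [NormedSpace ℝ E]
    [SeminormedAddCommGroup F] [NormedSpace ℝ F] (f : Dual ℝ E → F) : Prop :=
  Continuous fun x : WeakDual ℝ E => toWeakSpace ℝ F (f (WeakDual.toStrongDual x))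

variable (A)

/-- The second adjoint `T'' : A** → A**` of `T : A → A`. -/
def secondAdj (T : A →L[ℝ] A) : Dual ℝ (Dual ℝ A) →L[ℝ] Dual ℝ (Dual ℝ A) :=
  adjCLM (adjCLM T)

/-- Left action of `A` on `A*`: `⟨a·a', b⟩ = ⟨a', ba⟩`. -/
def dualLeft : A →L[ℝ] Dual ℝ A →L[ℝ] Dual ℝ A :=
  (ext1 (ContinuousLinearMap.mul ℝ A).flip).flip

/-- Right action of `A` on `A*`: `⟨a'·a, b⟩ = ⟨a', ab⟩`. -/
def dualRight : Dual ℝ A →L[ℝ] A →L[ℝ] Dual ℝ A :=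
  ext1 (ContinuousLinearMap.mul ℝ A)

/-- Left action of `A**` (first Arens product) on `A***`. -/
def dualLeft2 : Dual ℝ (Dual ℝ A) →L[ℝ] Dual ℝ (Dual ℝ (Dual ℝ A)) →L[ℝ]
    Dual ℝ (Dual ℝ (Dual ℝ A)) :=
  (ext1 (fArens A).flip).flip

/-- Right action of `A**` (first Arens product) on `A***`. -/
def dualRight2 : Dual ℝ (Dual ℝ (Dual ℝ A)) →L[ℝ] Dual ℝ (Dual ℝ A) →L[ℝ]
    Dual ℝ (Dual ℝ (Dual ℝ A)) :=
  ext1 (fArens A)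

end ArensSetup

section BimoduleSetup

set_option maxHeartbeats 1000000

open Filter Topology ContinuousLinearMap NormedSpace

/-- A Banach `A`-bimodule: bounded bilinear left and right actions satisfying the
usual compatibility axioms. -/
structure BanachBimodule (A X : Type*) [NonUnitalNormedRing A] [NormedSpace ℝ A]
    [SMulCommClass ℝ A A] [IsScalarTower ℝ A A]
    [NormedAddCommGroup X] [NormedSpace ℝ X] [CompleteSpace X] where
  l : A →L[ℝ] X →L[ℝ] X
  r : X →L[ℝ] A →L[ℝ] X
  l_mul : ∀ a b x, l (a * b) x = l a (l b x)
  r_mul : ∀ x a b, r (r x a) b = r x (a * b)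
  l_r : ∀ a x b, l a (r x b) = r (l a x) b

variable {A X : Type*} [NonUnitalNormedRing A] [NormedSpace ℝ A]
  [SMulCommClass ℝ A A] [IsScalarTower ℝ A A] [CompleteSpace A]
  [NormedAddCommGroup X] [NormedSpace ℝ X] [CompleteSpace X]

/-- Left action of `A` on `X*`: `⟨a·f, x⟩ = ⟨f, x·a⟩`. -/
noncomputable def modDualLeft (M : BanachBimodule A X) : A →L[ℝ] Dual ℝ X →L[ℝ] Dual ℝ X :=
  (ext1 M.r.flip).flip

/-- Right action of `A` on `X*`: `⟨f·a, x⟩ = ⟨f, a·x⟩`. -/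
noncomputable def modDualRight (M : BanachBimodule A X) : Dual ℝ X →L[ℝ] A →L[ℝ] Dual ℝ X :=
  ext1 M.l

/-- Left action of `A**` on `X**` (first Arens extension). -/
noncomputable def modL2 (M : BanachBimodule A X) :
    Dual ℝ (Dual ℝ A) →L[ℝ] Dual ℝ (Dual ℝ X) →L[ℝ] Dual ℝ (Dual ℝ X) :=
  ext3 M.l

/-- Right action of `A**` on `X**` (first Arens extension); `modR2 M x'' a'' = x''a''`. -/
noncomputable def modR2 (M : BanachBimodule A X) :
    Dual ℝ (Dual ℝ X) →L[ℝ] Dual ℝ (Dual ℝ A) →L[ℝ] Dual ℝ (Dual ℝ X) :=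
  ext3 M.r

/-- Left action of `A**` on `X***`: `⟨a''·x''', x''⟩ = ⟨x''', x''a''⟩`. -/
noncomputable def modL3 (M : BanachBimodule A X) :
    Dual ℝ (Dual ℝ A) →L[ℝ] Dual ℝ (Dual ℝ (Dual ℝ X)) →L[ℝ] Dual ℝ (Dual ℝ (Dual ℝ X)) :=
  (ext1 (modR2 M).flip).flip

/-- Right action of `A**` on `X***`: `⟨x'''·a'', x''⟩ = ⟨x''', a''x''⟩`. -/
noncomputable def modR3 (M : BanachBimodule A X) :
    Dual ℝ (Dual ℝ (Dual ℝ X)) →L[ℝ] Dual ℝ (Dual ℝ A) →L[ℝ] Dual ℝ (Dual ℝ (Dual ℝ X)) :=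
  ext1 (modL2 M)

end BimoduleSetup

section DerivationSetup

variable {B Y : Type*} [SeminormedAddCommGroup B] [NormedSpace ℝ B]
  [SeminormedAddCommGroup Y] [NormedSpace ℝ Y]

/-- `D` is a derivation with respect to the multiplication `m` and the module
actions `l`, `r`. -/
def IsDeriv (m : B →L[ℝ] B →L[ℝ] B) (l : B →L[ℝ] Y →L[ℝ] Y)
    (r : Y →L[ℝ] B →L[ℝ] Y) (D : B →L[ℝ] Y) : Prop :=
  ∀ a b, D (m a b) = l a (D b) + r (D a) b

/-- `D` is an inner derivation: `D a = a·y − y·a` for some fixed `y`. -/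
def IsInner (l : B →L[ℝ] Y →L[ℝ] Y) (r : Y →L[ℝ] B →L[ℝ] Y) (D : B →L[ℝ] Y) : Prop :=
  ∃ y, ∀ a, D a = l a y - r y a

/-- `D` is a `T-S`-derivation: `D(ab) = T(a)·D(b) + D(a)·S(b)`. -/
def IsTSDeriv (m : B →L[ℝ] B →L[ℝ] B) (l : B →L[ℝ] Y →L[ℝ] Y)
    (r : Y →L[ℝ] B →L[ℝ] Y) (T S : B →L[ℝ] B) (D : B →L[ℝ] Y) : Prop :=
  ∀ a b, D (m a b) = l (T a) (D b) + r (D a) (S b)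

/-- `D` is an inner `T-S`-derivation: `D a = T(a)·y − y·S(a)` for some fixed `y`. -/
def IsTSInner (l : B →L[ℝ] Y →L[ℝ] Y) (r : Y →L[ℝ] B →L[ℝ] Y)
    (T S : B →L[ℝ] B) (D : B →L[ℝ] Y) : Prop :=
  ∃ y, ∀ a, D a = l (T a) y - r y (S a)

end DerivationSetup

/-!
The open mapping theorem makes `D'` bounded below, so by Hahn–Banach `D'' : A** → A***` is
onto. Hence `D''(A**)·A** ⊆ A*` says that `Λ ∘ (c'' · _)` lies in `A*` for every `Λ ∈ A***`;
since the weak-star continuous functionals on `A**` are exactly the evaluations at points of `A*`,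
this is weak-star-to-weak continuity of `b'' ↦ c''b''`. In that case `⟨c''b'', a'⟩ = ⟨b'', y⟩`
for some `y ∈ A*`, and `y` agrees on `A` with the functional defining the second Arens product,
so the two products coincide.
-/

theorem exists_comp_eq_of_norm_le_mul_norm {E F : Type*} [NormedAddCommGroup E] [NormedSpace ℝ E]
    [SeminormedAddCommGroup F] [NormedSpace ℝ F] (S : E →L[ℝ] F) {C : ℝ}
    (hS : ∀ x, ‖x‖ ≤ C * ‖S x‖) (φ : Dual ℝ E) : ∃ ψ : Dual ℝ F, ψ.comp S = φ := by
  have hinj : Function.Injective S := (injective_iff_map_eq_zero S).2 fun x hx =>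
    norm_le_zero_iff.1 (by simpa [hx] using hS x)
  let e := LinearEquiv.ofInjective S.toLinearMap hinj
  have he : ∀ z, ‖e.symm z‖ ≤ C * ‖z‖ := fun z => by
    have hz : S (e.symm z) = z := congrArg Subtype.val (e.apply_symm_apply z)
    have := hS (e.symm z)
    rwa [hz] at this
  let φ₀ : Dual ℝ (LinearMap.range S.toLinearMap) :=
    (φ.toLinearMap ∘ₗ e.symm.toLinearMap).mkContinuous (‖φ‖ * C) fun z =>
      calc ‖φ (e.symm z)‖ ≤ ‖φ‖ * ‖e.symm z‖ := φ.le_opNorm _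
        _ ≤ ‖φ‖ * C * ‖z‖ := by rw [mul_assoc]; gcongr; exact he z
  obtain ⟨ψ, hψ, -⟩ := exists_extension_norm_eq _ φ₀
  refine ⟨ψ, ext fun x => ?_⟩
  simpa [φ₀, e] using hψ (e x)

theorem adjCLM_adjCLM_surjective {E F : Type*} [NormedAddCommGroup E] [NormedSpace ℝ E]
    [CompleteSpace E] [NormedAddCommGroup F] [NormedSpace ℝ F] [CompleteSpace F] (T : E →L[ℝ] F)
    (hT : Function.Surjective T) : Function.Surjective (adjCLM (adjCLM T)) := by
  obtain ⟨C, hC, hpre⟩ := T.exists_preimage_norm_le hT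
  have hbelow : ∀ g : Dual ℝ F, ‖g‖ ≤ C * ‖adjCLM T g‖ := fun g =>
    g.opNorm_le_bound (by positivity) fun y => by
      obtain ⟨x, rfl, hx⟩ := hpre y
      calc ‖adjCLM T g x‖ ≤ ‖adjCLM T g‖ * ‖x‖ := le_opNorm _ x
        _ ≤ ‖adjCLM T g‖ * (C * ‖T x‖) := by gcongr
        _ = C * ‖adjCLM T g‖ * ‖T x‖ := by ring
  exact exists_comp_eq_of_norm_le_mul_norm (adjCLM T) hbelow

section WeakStar

variable {E F : Type*} [SeminormedAddCommGroup E] [NormedSpace ℝ E]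
  [SeminormedAddCommGroup F] [NormedSpace ℝ F]

theorem wStarToWCont_iff (f : Dual ℝ E →L[ℝ] F) :
    WStarToWCont f ↔ ∀ Λ : Dual ℝ F, ∃ y : E, Λ.comp f = inclusionInDoubleDual ℝ E y := by
  constructor
  · intro hf Λ
    have hΛf : Continuous fun x : WeakDual ℝ E => Λ (f x) :=
      (WeakBilin.eval_continuous _ Λ).comp hf
    obtain ⟨y, hy⟩ := LinearMap.dualEmbedding_surjective (topDualPairing ℝ E)
      ⟨(Λ.comp f).toLinearMap, hΛf⟩
    exact ⟨y, ext fun x => (DFunLike.congr_fun hy x).symm⟩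
  · intro hf
    refine WeakBilin.continuous_of_continuous_eval _ fun Λ => ?_
    obtain ⟨y, hy⟩ := hf Λ
    exact (WeakBilin.eval_continuous _ y).congr fun x => (DFunLike.congr_fun hy x).symm

theorem ext3_eq_flip_ext3_flip_of_wStarToWCont {G : Type*} [SeminormedAddCommGroup G]
    [NormedSpace ℝ G] (β : E →L[ℝ] F →L[ℝ] G) (hβ : ∀ e'', WStarToWCont (ext3 β e'')) :
    ext3 β = (ext3 β.flip).flip := by
  ext e'' f'' g'
  obtain ⟨y, hy⟩ := (wStarToWCont_iff _).1 (hβ e'') (inclusionInDoubleDual ℝ _ g')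
  -- at `f ∈ F` both sides are `e'' (fun e => g' (β e f))`
  have hy_eq : y = ext1 (ext1 β.flip) e'' g' :=
    ext fun f => (DFunLike.congr_fun hy (inclusionInDoubleDual ℝ _ f)).symm
  exact (DFunLike.congr_fun hy f'').trans (congrArg f'' hy_eq)

end WeakStar

section Statements
set_option maxHeartbeats 1000000
open Filter Topology ContinuousLinearMap NormedSpace

variable {A : Type*} [NonUnitalNormedRing A] [NormedSpace ℝ A]
  [SMulCommClass ℝ A A] [IsScalarTower ℝ A A] [CompleteSpace A]

theorem Iwsw_iff_secondAdjoint_prod_general (D : A →L[ℝ] Dual ℝ A)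
    (hsurj : Function.Surjective D) :
    ((∀ a'' : Dual ℝ (Dual ℝ A), WStarToWCont (fun b'' => fArens A a'' b'')) ↔
      (∀ (a'' c'' : Dual ℝ (Dual ℝ A)), ∃ a' : Dual ℝ A, (adjCLM (adjCLM D) a'').comp (fArens A c'') = inclusionInDoubleDual ℝ (Dual ℝ A) a')) ∧
    ((∀ (a'' c'' : Dual ℝ (Dual ℝ A)), ∃ a' : Dual ℝ A, (adjCLM (adjCLM D) a'').comp (fArens A c'') = inclusionInDoubleDual ℝ (Dual ℝ A) a') → ArensRegular A) := by
  have hiff : (∀ c'' : Dual ℝ (Dual ℝ A), WStarToWCont (fArens A c'')) ↔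
      ∀ a'' c'' : Dual ℝ (Dual ℝ A), ∃ a' : Dual ℝ A,
        (adjCLM (adjCLM D) a'').comp (fArens A c'') = inclusionInDoubleDual ℝ (Dual ℝ A) a' :=
    calc (∀ c'', WStarToWCont (fArens A c''))
        ↔ ∀ c'' (Λ : Dual ℝ (Dual ℝ (Dual ℝ A))), ∃ a' : Dual ℝ A,
            Λ.comp (fArens A c'') = inclusionInDoubleDual ℝ (Dual ℝ A) a' :=
          forall_congr' fun _ => wStarToWCont_iff _
      _ ↔ ∀ c'' a'', ∃ a' : Dual ℝ A,
            (adjCLM (adjCLM D) a'').comp (fArens A c'') = inclusionInDoubleDual ℝ (Dual ℝ A) a' :=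
          forall_congr' fun _ => (adjCLM_adjCLM_surjective D hsurj).forall
      _ ↔ _ := forall_comm
  exact ⟨hiff, fun h => ext3_eq_flip_ext3_flip_of_wStarToWCont _ (hiff.2 h)⟩

/-- For a surjective derivation `D : A → A*`: `A` has the `I-w*w` property iff
`D''(A**)·A** ⊆ A*`; and the latter implies Arens regularity of `A`. -/
theorem Iwsw_iff_secondAdjoint_prod (D : A →L[ℝ] Dual ℝ A)
    (hD : IsDeriv (ContinuousLinearMap.mul ℝ A) (dualLeft A) (dualRight A) D)
    (hsurj : Function.Surjective D) :
    ((∀ a'' : Dual ℝ (Dual ℝ A), WStarToWCont (fun b'' => fArens A a'' b'')) ↔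
      (∀ (a'' c'' : Dual ℝ (Dual ℝ A)), ∃ a' : Dual ℝ A, (adjCLM (adjCLM D) a'').comp (fArens A c'') = inclusionInDoubleDual ℝ (Dual ℝ A) a')) ∧
    ((∀ (a'' c'' : Dual ℝ (Dual ℝ A)), ∃ a' : Dual ℝ A, (adjCLM (adjCLM D) a'').comp (fArens A c'') = inclusionInDoubleDual ℝ (Dual ℝ A) a') → ArensRegular A) :=
  Iwsw_iff_secondAdjoint_prod_general D hsurj

end Statements
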